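/- arXiv:2206.08954 — 2 statements merged into one kernel-verified Lean document; each statement's English description precedes it below -/
import Mathlib

section
/- Let X be a measurable space, let μ₁ and μ₂ be probability measures on X, and let r : X × X → ℝ≥0 be a measurable density such that the joint measure ν := (μ₁ ⊗ μ₂).withDensity r is a probability measure (i.e., ∫ r d(μ₁ ⊗ μ₂) = 1). Let z : X → ℝ^d be a measurable embedding map such that the function f(x₁, x₂) := ⟨z x₁, z x₂⟩ is in L²(μ₁ ⊗ μ₂) and r is in L²(μ₁ ⊗ μ₂). Let w > 0 and set λ := w/2. Then the co-occurrence modeling loss equals a positive multiple of the spectral contrastive loss plus a constant independent of z: ∫ (w·⟨z x₁, z x₂⟩ − r(x₁, x₂))² d(μ₁ ⊗ μ₂) = 2w · ( ∫ (−⟨z x₁, z x₂⟩) dν + λ · ∫ ⟨z x₁, z x₂⟩² d(μ₁ ⊗ μ₂) ) + ∫ r² d(μ₁ ⊗ μ₂). -/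
open MeasureTheory
open scoped NNReal ENNReal

/-! Both losses are quadratic in `f = ⟨z x₁, z x₂⟩`. Expanding the square in `L_C` gives
`w² ∫ f² - 2w ∫ f r + ∫ r²`, and the cross term `∫ f r d(μ₁ ⊗ μ₂)` is exactly `∫ f dν` because `r`
is the density of `ν`; with `λ = w / 2` this is `2w · L_S + ∫ r²`. -/

namespace MeasureTheory

variable {α : Type*} [MeasurableSpace α] {μ : Measure α}

theorem integral_withDensity_nnreal_eq_integral_mul {r : α → ℝ≥0} (hr : Measurable r)
    (g : α → ℝ) :
    ∫ x, g x ∂μ.withDensity (fun x => (r x : ℝ≥0∞)) = ∫ x, g x * r x ∂μ := by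
  simp only [integral_withDensity_eq_integral_smul hr, NNReal.smul_def, smul_eq_mul, mul_comm]

theorem integral_mul_sub_sq_of_memLp_two {f g : α → ℝ} (hf : MemLp f 2 μ) (hg : MemLp g 2 μ)
    (c : ℝ) :
    ∫ x, (c * f x - g x) ^ 2 ∂μ
      = c ^ 2 * ∫ x, f x ^ 2 ∂μ - 2 * c * ∫ x, f x * g x ∂μ + ∫ x, g x ^ 2 ∂μ := by
  have hf2 := hf.integrable_sq
  have hfg : Integrable (fun x => f x * g x) μ := hf.integrable_mul hg
  have hcross : Integrable (fun x => c ^ 2 * f x ^ 2 - 2 * c * (f x * g x)) μ :=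
    (hf2.const_mul _).sub (hfg.const_mul _)
  calc ∫ x, (c * f x - g x) ^ 2 ∂μ
      = ∫ x, (c ^ 2 * f x ^ 2 - 2 * c * (f x * g x)) + g x ^ 2 ∂μ := by
        congr 1 with x; ring
    _ = c ^ 2 * ∫ x, f x ^ 2 ∂μ - 2 * c * ∫ x, f x * g x ∂μ + ∫ x, g x ^ 2 ∂μ := by
        rw [integral_add hcross hg.integrable_sq,
          integral_sub (hf2.const_mul _) (hfg.const_mul _), integral_const_mul,
          integral_const_mul]

end MeasureTheory

theorem cooccurrence_loss_eq_spectral_loss_general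
    {X : Type*} [MeasurableSpace X] (μ₁ μ₂ : Measure X)
    (r : X × X → ℝ≥0) (hr : Measurable r)
    (ν : Measure (X × X))
    (hν : ν = (μ₁.prod μ₂).withDensity (fun p => (r p : ℝ≥0∞)))
    (f : X × X → ℝ)
    (hfL2 : MemLp f 2 (μ₁.prod μ₂))
    (hrL2 : MemLp (fun p => (r p : ℝ)) 2 (μ₁.prod μ₂))
    (w : ℝ) (lam : ℝ) (hlam : lam = w / 2) :
    ∫ p, (w * f p - (r p : ℝ)) ^ 2 ∂(μ₁.prod μ₂)
      = 2 * w *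
          ((∫ p, (- f p) ∂ν) + lam * ∫ p, (f p) ^ 2 ∂(μ₁.prod μ₂))
        + ∫ p, ((r p : ℝ)) ^ 2 ∂(μ₁.prod μ₂) := by
  rw [integral_mul_sub_sq_of_memLp_two hfL2 hrL2, hν,
    integral_withDensity_nnreal_eq_integral_mul hr]
  simp only [neg_mul, integral_neg, hlam]
  ring

/-- **Proposition 1 (co-occurrence modeling ↔ spectral contrastive loss).**
Let `μ₁, μ₂` be probability measures on `X`, `r` a measurable nonnegative density such
that `ν := (μ₁ ⊗ μ₂).withDensity r` is a probability measure, and `z : X → ℝ^d`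
measurable with `f (x₁, x₂) := ⟨z x₁, z x₂⟩` and `r` both in `L²(μ₁ ⊗ μ₂)`.
For `w > 0` and `λ = w / 2`, the co-occurrence loss equals `2w` times the spectral
contrastive loss plus a constant (namely `∫ r²`) independent of `z`. -/
theorem cooccurrence_loss_eq_spectral_loss
    {X : Type*} [MeasurableSpace X] (μ₁ μ₂ : Measure X)
    [IsProbabilityMeasure μ₁] [IsProbabilityMeasure μ₂]
    (d : ℕ) (z : X → EuclideanSpace ℝ (Fin d)) (hz : Measurable z)
    (r : X × X → ℝ≥0) (hr : Measurable r)
    (ν : Measure (X × X))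
    (hν : ν = (μ₁.prod μ₂).withDensity (fun p => (r p : ℝ≥0∞)))
    (hνprob : IsProbabilityMeasure ν)
    (f : X × X → ℝ)
    (hf : f = fun p => (inner ℝ (z p.1) (z p.2) : ℝ))
    (hfL2 : MemLp f 2 (μ₁.prod μ₂))
    (hrL2 : MemLp (fun p => (r p : ℝ)) 2 (μ₁.prod μ₂))
    (w : ℝ) (hw : 0 < w) (lam : ℝ) (hlam : lam = w / 2) :
    ∫ p, (w * f p - (r p : ℝ)) ^ 2 ∂(μ₁.prod μ₂)
      = 2 * w *
          ((∫ p, (- f p) ∂ν) + lam * ∫ p, (f p) ^ 2 ∂(μ₁.prod μ₂))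
        + ∫ p, ((r p : ℝ)) ^ 2 ∂(μ₁.prod μ₂) :=
  cooccurrence_loss_eq_spectral_loss_general μ₁ μ₂ r hr ν hν f hfL2 hrL2 w lam hlam
end

section
/- Let Z be a real N × d matrix whose rows are L2-normalized, i.e., Σ_{j} Z_{ij}² = 1 for every row index i. Then ‖ZᵀZ − I_d‖_F² = ‖ZZᵀ − I_N‖_F² + (d − N), where I_d and I_N are the d × d and N × N identity matrices. -/
open Matrix
open scoped BigOperators

/-- The squared Frobenius norm of a real matrix: `‖A‖_F² = Σ_{i,j} A_{ij}²`. -/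
def frobSq {m n : Type*} [Fintype m] [Fintype n] (A : Matrix m n ℝ) : ℝ :=
  ∑ i, ∑ j, (A i j) ^ 2

lemma frobSq_sub_one {n : Type*} [Fintype n] [DecidableEq n] (A : Matrix n n ℝ) :
    frobSq (A - 1) = (∑ i, ∑ j, (A i j)^2) - 2 * (∑ i, A i i) + (Fintype.card n : ℝ) := by
  unfold frobSq
  have h : ∀ i j : n, ((A - 1) i j)^2 = (A i j)^2 - 2 * (if i = j then A i i else 0)
      + (if i = j then (1:ℝ) else 0) := by
    intro i j
    by_cases hij : i = j <;> simp [Matrix.sub_apply, Matrix.one_apply, hij] <;> ring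
  simp only [h, Finset.sum_add_distrib, Finset.sum_sub_distrib, Finset.sum_ite_eq,
    Finset.mem_univ, if_true, Finset.mul_sum]
  simp [Finset.mul_sum, Finset.card_univ]

lemma sumsq_eq_trace_sq {n : Type*} [Fintype n] (A : Matrix n n ℝ)
    (hA : ∀ i j, A j i = A i j) :
    (∑ i, ∑ j, (A i j)^2) = Matrix.trace (A * A) := by
  simp only [Matrix.trace, Matrix.diag, Matrix.mul_apply]
  refine Finset.sum_congr rfl fun i _ => Finset.sum_congr rfl fun j _ => ?_
  rw [hA i j, sq]

/-- **Appendix B, first equality.** If the rows of the real `N × d` matrix `Z` are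
L2-normalized (`Σ_j Z_{ij}² = 1` for every `i`), then
`‖ZᵀZ − I_d‖_F² = ‖ZZᵀ − I_N‖_F² + (d − N)`. -/
theorem frobSq_gram_sub_one_duality {N d : ℕ} (Z : Matrix (Fin N) (Fin d) ℝ)
    (hrow : ∀ i : Fin N, ∑ j : Fin d, (Z i j) ^ 2 = 1) :
    frobSq (Zᵀ * Z - 1) = frobSq (Z * Zᵀ - 1) + ((d : ℝ) - (N : ℝ)) := by
  rw [frobSq_sub_one, frobSq_sub_one]
  have htr1 : (∑ i, (Zᵀ * Z) i i) = (N : ℝ) := by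
    simp only [Matrix.mul_apply, Matrix.transpose_apply]
    rw [Finset.sum_comm]
    simp [← sq, hrow]
  have htr2 : (∑ i, (Z * Zᵀ) i i) = (N : ℝ) := by
    simp [Matrix.mul_apply, Matrix.transpose_apply, ← sq, hrow]
  have h1 : ∀ i j, (Zᵀ * Z) j i = (Zᵀ * Z) i j := by
    intro i j
    simp only [Matrix.mul_apply, Matrix.transpose_apply]
    exact Finset.sum_congr rfl fun k _ => mul_comm _ _
  have h2 : ∀ i j, (Z * Zᵀ) j i = (Z * Zᵀ) i j := by
    intro i j
    simp only [Matrix.mul_apply, Matrix.transpose_apply]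
    exact Finset.sum_congr rfl fun k _ => mul_comm _ _
  have hsq : (∑ i, ∑ j, ((Zᵀ * Z) i j)^2) = ∑ i, ∑ j, ((Z * Zᵀ) i j)^2 := by
    rw [sumsq_eq_trace_sq _ h1, sumsq_eq_trace_sq _ h2]
    rw [show (Zᵀ * Z) * (Zᵀ * Z) = Zᵀ * (Z * Zᵀ * Z) by rw [Matrix.mul_assoc, Matrix.mul_assoc],
      Matrix.trace_mul_comm]
    rw [show Z * Zᵀ * Z * Zᵀ = (Z * Zᵀ) * (Z * Zᵀ) by rw [Matrix.mul_assoc]]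
  rw [htr1, htr2, hsq]
  simp
end
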